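/- Let V be a finite type, E : Finset (Finset V) a finite hypergraph, and J : Finset V → ℝ hyperedge weights. For x : V → ℝ write x(e) = ∏_{w∈e} x w and C(x) = Σ_{e∈E} J e · x(e). Fix f : Finset V, v ∈ f, and σ ∈ ℝ with σ = 1 ∨ σ = −1. For y : V → ℝ define C'(y) = Σ_{e∈E, v∉e} J e · y(e) + Σ_{e∈E, v∈e} σ · J e · y(e △ f), where △ is the symmetric difference of finite sets. Then the maximum of C(x) over all x : V → ℝ with (∀ w, x w = 1 ∨ x w = −1) and x(f) = σ equals the maximum of C'(y) over all y : V → ℝ with (∀ w, y w = 1 ∨ y w = −1) and y v = 1. -/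

import Mathlib

/-!
Since every spin squares to one, `x(e) x(f) = x(e △ f)`, so under the constraint `x(f) = σ` each
term `J e x(e)` equals `σ J e x(e △ f)`, i.e. `C x = C' x`. As `v ∈ f`, the vertex `v` occurs in
none of the sets `e` (for `v ∉ e`) and `e △ f` (for `v ∈ e`) seen by `C'`, so `C'` ignores the spin
at `v`; conversely the constraint can always be met by resetting that spin to `σ x(f \ {v})`.
Hence both maximisations range over the same set of values.
-/

open Finset Function

namespace RecursiveQAOA

section Products

variable {ι M : Type*} [CommMonoid M] {x : ι → M}

theorem prod_mul_self_eq_one (hx : ∀ i, x i * x i = 1) (s : Finset ι) :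
    (∏ i ∈ s, x i) * ∏ i ∈ s, x i = 1 := by
  rw [← prod_mul_distrib]
  exact prod_eq_one fun i _ => hx i

variable [DecidableEq ι]

theorem prod_mul_prod_eq_prod_symmDiff (hx : ∀ i, x i * x i = 1) (s t : Finset ι) :
    (∏ i ∈ s, x i) * ∏ i ∈ t, x i = ∏ i ∈ symmDiff s t, x i := by
  have hdisj : Disjoint (symmDiff s t) (s ∩ t) := disjoint_symmDiff_inf s t
  rw [← prod_union_inter, ← sup_eq_union, ← symmDiff_sup_inf, sup_eq_union, inf_eq_inter,
    prod_union hdisj, mul_assoc, prod_mul_self_eq_one hx, mul_one]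

theorem update_mul_self_eq_one (hx : ∀ i, x i * x i = 1) (j : ι) {a : M} (ha : a * a = 1) :
    ∀ i, update x j a i * update x j a i = 1 :=
  (forall_update_iff x fun _ t => t * t = 1).mpr ⟨ha, fun i _ => hx i⟩

theorem exists_prod_update_eq (hx : ∀ i, x i * x i = 1) {s : Finset ι} {j : ι} (hj : j ∈ s)
    {σ : M} (hσ : σ * σ = 1) : ∃ a, a * a = 1 ∧ ∏ i ∈ s, update x j a i = σ := by
  set P := ∏ i ∈ s \ {j}, x i
  have hP : P * P = 1 := prod_mul_self_eq_one hx _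
  refine ⟨σ * P, ?_, ?_⟩
  · rw [mul_mul_mul_comm, hσ, hP, one_mul]
  · rw [prod_update_of_mem hj, mul_assoc, hP, mul_one]

end Products

variable {V : Type*} [DecidableEq V]

def cost (E : Finset (Finset V)) (J : Finset V → ℝ) (x : V → ℝ) : ℝ :=
  ∑ e ∈ E, J e * ∏ w ∈ e, x w

def reducedCost (E : Finset (Finset V)) (J : Finset V → ℝ) (f : Finset V) (v : V) (σ : ℝ)
    (y : V → ℝ) : ℝ :=
  (∑ e ∈ E.filter (fun e => v ∉ e), J e * ∏ w ∈ e, y w) +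
    (∑ e ∈ E.filter (fun e => v ∈ e), σ * J e * ∏ w ∈ symmDiff e f, y w)

theorem cost_eq_reducedCost (E : Finset (Finset V)) (J : Finset V → ℝ) {f : Finset V} (v : V)
    {σ : ℝ} (hσ : σ * σ = 1) {x : V → ℝ} (hx : ∀ w, x w * x w = 1)
    (hxf : ∏ w ∈ f, x w = σ) : cost E J x = reducedCost E J f v σ x := by
  have hterm : ∀ e, J e * ∏ w ∈ e, x w = σ * J e * ∏ w ∈ symmDiff e f, x w := fun e => by
    rw [← prod_mul_prod_eq_prod_symmDiff hx, hxf]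
    linear_combination -(J e * ∏ w ∈ e, x w) * hσ
  rw [cost, reducedCost, ← sum_filter_not_add_sum_filter E (fun e => v ∈ e)]
  simp only [hterm]

theorem reducedCost_update (E : Finset (Finset V)) (J : Finset V → ℝ) {f : Finset V} {v : V}
    (hv : v ∈ f) (σ : ℝ) (y : V → ℝ) (a : ℝ) :
    reducedCost E J f v σ (update y v a) = reducedCost E J f v σ y := by
  unfold reducedCost
  congr 1 <;> refine sum_congr rfl fun e he => ?_ <;> rw [mem_filter] at he
  · rw [prod_update_of_notMem he.2]
  · rw [prod_update_of_notMem (by simp [mem_symmDiff, he.2, hv])]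

end RecursiveQAOA

open RecursiveQAOA in
theorem stmt13 (V : Type*) [DecidableEq V]
    (E : Finset (Finset V)) (J : Finset V → ℝ)
    (f : Finset V) (v : V) (hv : v ∈ f) (σ : ℝ) (hσ : σ = 1 ∨ σ = -1) :
    sSup {c : ℝ | ∃ x : V → ℝ, (∀ w, x w = 1 ∨ x w = -1) ∧ (∏ w ∈ f, x w) = σ ∧
        c = ∑ e ∈ E, J e * ∏ w ∈ e, x w} =
    sSup {c : ℝ | ∃ y : V → ℝ, (∀ w, y w = 1 ∨ y w = -1) ∧ y v = 1 ∧
        c = (∑ e ∈ E.filter (fun e => v ∉ e), J e * ∏ w ∈ e, y w) +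
            (∑ e ∈ E.filter (fun e => v ∈ e), σ * J e * ∏ w ∈ symmDiff e f, y w)} := by
  replace hσ : σ * σ = 1 := mul_self_eq_one_iff.mpr hσ
  simp only [← mul_self_eq_one_iff]
  congr 1
  ext c
  constructor
  · rintro ⟨x, hx, hxf, rfl⟩
    refine ⟨update x v 1, update_mul_self_eq_one hx v (one_mul 1), update_self v 1 x, ?_⟩
    exact (cost_eq_reducedCost E J v hσ hx hxf).trans (reducedCost_update E J hv σ x 1).symm
  · rintro ⟨y, hy, -, rfl⟩
    obtain ⟨a, ha, hxf⟩ := exists_prod_update_eq hy hv hσ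
    have hx := update_mul_self_eq_one hy v ha
    exact ⟨update y v a, hx, hxf,
      ((cost_eq_reducedCost E J v hσ hx hxf).trans (reducedCost_update E J hv σ y a)).symm⟩
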